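/- Let C be a binary singly even self-dual [n, n/2, d] code with d ≥ 3 whose shadow S contains a vector of weight 1. Then that weight-1 vector is the unique vector of S of weight 1, and the map y ↦ x + y, where x is this weight-1 vector, is a bijection from the set of weight-(d−1) vectors of S onto a subset of the weight-d codewords of C; in particular B_{d−1} ≤ A_d. -/

import Mathlib

open Finset

variable {ι : Type*} [Fintype ι]

/-- Standard inner product over GF(2). -/
def dotp (x y : ι → ZMod 2) : ZMod 2 := ∑ i, x i * y i

/-- The dual code. -/
def dualCode (C : Submodule (ZMod 2) (ι → ZMod 2)) :
    Submodule (ZMod 2) (ι → ZMod 2) where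
  carrier := {x | ∀ c ∈ C, dotp x c = 0}
  add_mem' := fun {a b} ha hb c hc => by
    simp only [dotp, Pi.add_apply, add_mul, Finset.sum_add_distrib]
    rw [show (∑ i, a i * c i) = 0 from ha c hc, show (∑ i, b i * c i) = 0 from hb c hc, add_zero]
  zero_mem' := fun c hc => by simp [dotp]
  smul_mem' := fun r a ha c hc => by
    simp only [dotp, Pi.smul_apply, smul_eq_mul, mul_assoc, ← Finset.mul_sum]
    rw [show (∑ i, a i * c i) = 0 from ha c hc, mul_zero]

/-- Hamming weight. -/
def wt (x : ι → ZMod 2) : ℕ := (Finset.univ.filter fun i => x i ≠ 0).card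

lemma zmod2_cases (a : ZMod 2) : a = 0 ∨ a = 1 := by
  fin_cases a
  · exact Or.inl rfl
  · exact Or.inr rfl

lemma zmod2_add_eq_zero (a b : ZMod 2) : a + b = 0 → a = b := by
  intro h
  calc a = a + b + b := by rw [add_assoc, CharTwo.add_self_eq_zero, add_zero]
    _ = b := by rw [h, zero_add]

lemma sum_eq_card_cast (f : ι → ZMod 2) :
    ∑ i, f i = ((Finset.univ.filter fun i => f i ≠ 0).card : ZMod 2) := by
  rw [← Finset.sum_filter_ne_zero]
  rw [Finset.card_eq_sum_ones, Nat.cast_sum]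
  apply Finset.sum_congr rfl
  intro i hi
  simp only [Finset.mem_filter] at hi
  rcases zmod2_cases (f i) with h | h
  · exact absurd h hi.2
  · simp [h]

lemma dotp_eq_card_inter (a b : ι → ZMod 2) :
    dotp a b = ((Finset.univ.filter fun i => a i ≠ 0 ∧ b i ≠ 0).card : ZMod 2) := by
  rw [dotp, sum_eq_card_cast]
  congr 2
  apply Finset.filter_congr
  intro i _
  rcases zmod2_cases (a i) with h | h <;> rcases zmod2_cases (b i) with h' | h' <;>
    simp [h, h']

lemma dotp_add_left' (x y c : ι → ZMod 2) : dotp (x + y) c = dotp x c + dotp y c := by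
  simp [dotp, add_mul, Finset.sum_add_distrib]

lemma dotp_add_right' (x b c : ι → ZMod 2) : dotp x (b + c) = dotp x b + dotp x c := by
  simp [dotp, mul_add, Finset.sum_add_distrib]

lemma wt_add_eq (a b : ι → ZMod 2) :
    wt (a + b) + 2 * (Finset.univ.filter fun i => a i ≠ 0 ∧ b i ≠ 0).card = wt a + wt b := by
  classical
  simp only [wt]
  set A := Finset.univ.filter fun i => a i ≠ 0
  set B := Finset.univ.filter fun i => b i ≠ 0
  have hset : (Finset.univ.filter fun i => (a + b) i ≠ 0) = (A ∪ B) \ (A ∩ B) := by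
    ext i
    simp only [Finset.mem_filter, Finset.mem_sdiff, Finset.mem_union, Finset.mem_inter,
      Finset.mem_univ, true_and, Pi.add_apply, A, B]
    rcases zmod2_cases (a i) with h | h <;> rcases zmod2_cases (b i) with h' | h' <;>
      simp [h, h'] <;> decide
  have hinter : (Finset.univ.filter fun i => a i ≠ 0 ∧ b i ≠ 0) = A ∩ B := by
    ext i; simp [A, B]
  have h1 : (A ∪ B).card + (A ∩ B).card = A.card + B.card :=
    Finset.card_union_add_card_inter A B
  have h2 : A ∩ B ⊆ A ∪ B := (Finset.inter_subset_left).trans Finset.subset_union_left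
  have h3 := Finset.card_sdiff_of_subset h2
  have h4 := Finset.card_le_card h2
  rw [hset, hinter, h3]
  omega

/-- The weight-1 shadow vector is unique and `y ↦ x + y` maps
the weight-`(d-1)` shadow vectors injectively into the weight-`d` codewords;
in particular `B_{d-1} ≤ A_d`. -/
theorem shadow_weight_one_injection (n d : ℕ) (hd3 : 3 ≤ d)
    (C : Submodule (ZMod 2) (Fin n → ZMod 2))
    (hsd : C = dualCode C)
    (hse : ∃ c ∈ C, wt c % 4 = 2)
    (C0 : Submodule (ZMod 2) (Fin n → ZMod 2))
    (hC0 : (C0 : Set (Fin n → ZMod 2)) = {c | c ∈ C ∧ wt c % 4 = 0})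
    (S : Set (Fin n → ZMod 2))
    (hS : S = (dualCode C0 : Set (Fin n → ZMod 2)) \ C)
    (hmin : ∀ c ∈ C, c ≠ 0 → d ≤ wt c)
    (x : Fin n → ZMod 2) (hxS : x ∈ S) (hx1 : wt x = 1) :
    (∀ y ∈ S, wt y = 1 → y = x) ∧
    (∀ y ∈ S, wt y = d - 1 → x + y ∈ C ∧ wt (x + y) = d) ∧
    Set.InjOn (fun y => x + y) {y ∈ S | wt y = d - 1} ∧
    {y ∈ S | wt y = d - 1}.ncard ≤
      {c ∈ (C : Set (Fin n → ZMod 2)) | wt c = d}.ncard := by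
  classical
  have hdualmem : ∀ z : Fin n → ZMod 2, (∀ c ∈ C, dotp z c = 0) → z ∈ C := by
    intro z hz; rw [hsd]; exact hz
  have hCdot : ∀ a ∈ C, ∀ b ∈ C, dotp a b = 0 := by
    intro a ha b hb; rw [hsd] at ha; exact ha b hb
  have heven : ∀ c ∈ C, wt c % 2 = 0 := by
    intro c hc
    have h := hCdot c hc c hc
    rw [dotp_eq_card_inter] at h
    have e : (Finset.univ.filter fun i => c i ≠ 0 ∧ c i ≠ 0)
        = Finset.univ.filter fun i => c i ≠ 0 := by simp
    rw [e] at h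
    have h2 : 2 ∣ wt c := (ZMod.natCast_eq_zero_iff _ 2).mp h
    omega
  have hmod4 : ∀ c ∈ C, wt c % 4 = 0 ∨ wt c % 4 = 2 := by
    intro c hc; have := heven c hc; omega
  have hC0mem : ∀ c, c ∈ C0 ↔ c ∈ C ∧ wt c % 4 = 0 := by
    intro c
    constructor
    · intro h
      have h' : c ∈ (C0 : Set (Fin n → ZMod 2)) := h
      rw [hC0] at h'; exact h'
    · intro h
      have h' : c ∈ (C0 : Set (Fin n → ZMod 2)) := by rw [hC0]; exact h
      exact h'
  have hsum2 : ∀ a ∈ C, ∀ b ∈ C, wt a % 4 = 2 → wt b % 4 = 2 → a + b ∈ C0 := by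
    intro a ha b hb ha2 hb2
    have hd := hCdot a ha b hb
    rw [dotp_eq_card_inter] at hd
    have hk := (ZMod.natCast_eq_zero_iff _ 2).mp hd
    have hw := wt_add_eq a b
    refine (hC0mem _).mpr ⟨C.add_mem ha hb, ?_⟩
    omega
  rw [hS] at hxS
  obtain ⟨hx0, hxC⟩ := hxS
  have hx0' : ∀ c ∈ C0, dotp x c = 0 := hx0
  obtain ⟨c1, hc1C, hc1w⟩ := hse
  have hshadow1 : ∀ z : Fin n → ZMod 2, (∀ c ∈ C0, dotp z c = 0) → z ∉ C →
      ∀ c ∈ C, wt c % 4 = 2 → dotp z c = 1 := by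
    intro z hz0 hzC
    have key : ∀ c ∈ C, wt c % 4 = 2 → dotp z c = dotp z c1 := by
      intro c hc hc2
      have hc0 : c + c1 ∈ C0 := hsum2 c hc c1 hc1C hc2 hc1w
      have h := hz0 _ hc0
      rw [dotp_add_right'] at h
      exact zmod2_add_eq_zero _ _ h
    have hne : dotp z c1 ≠ 0 := by
      intro h0
      apply hzC
      apply hdualmem
      intro c hc
      rcases hmod4 c hc with h | h
      · exact hz0 c ((hC0mem c).mpr ⟨hc, h⟩)
      · rw [key c hc h, h0]
    intro c hc hc2
    rw [key c hc hc2]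
    rcases zmod2_cases (dotp z c1) with h | h
    · exact absurd h hne
    · exact h
  have hxdot := hshadow1 x hx0' hxC
  have haddC : ∀ y ∈ S, x + y ∈ C := by
    intro y hy
    rw [hS] at hy
    obtain ⟨hy0, hyC⟩ := hy
    have hy0' : ∀ c ∈ C0, dotp y c = 0 := hy0
    have hydot := hshadow1 y hy0' hyC
    apply hdualmem
    intro c hc
    rw [dotp_add_left']
    rcases hmod4 c hc with h | h
    · rw [hx0' c ((hC0mem c).mpr ⟨hc, h⟩), hy0' c ((hC0mem c).mpr ⟨hc, h⟩), add_zero]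
    · rw [hxdot c hc h, hydot c hc h]; decide
  have hkle : ∀ y : Fin n → ZMod 2,
      (Finset.univ.filter fun i => x i ≠ 0 ∧ y i ≠ 0).card ≤ 1 := by
    intro y
    calc (Finset.univ.filter fun i => x i ≠ 0 ∧ y i ≠ 0).card
        ≤ (Finset.univ.filter fun i => x i ≠ 0).card := by
          apply Finset.card_le_card
          intro i hi
          simp only [Finset.mem_filter] at hi ⊢
          exact ⟨hi.1, hi.2.1⟩
      _ = 1 := hx1
  have hyeqx : ∀ y : Fin n → ZMod 2, x + y = 0 → y = x := by
    intro y h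
    funext i
    have h' := congrFun h i
    simp only [Pi.add_apply, Pi.zero_apply] at h'
    exact (zmod2_add_eq_zero _ _ h').symm
  have part2 : ∀ y ∈ S, wt y = d - 1 → x + y ∈ C ∧ wt (x + y) = d := by
    intro y hyS hyw
    have hmem := haddC y hyS
    refine ⟨hmem, ?_⟩
    have hne : x + y ≠ 0 := by
      intro h
      have hyx := hyeqx y h
      rw [hyx, hx1] at hyw
      omega
    have hge := hmin _ hmem hne
    have hw := wt_add_eq x y
    rw [hx1, hyw] at hw
    have hk := hkle y
    omega
  have hinj : Set.InjOn (fun y => x + y) {y ∈ S | wt y = d - 1} :=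
    fun y1 _ y2 _ h => by simpa using add_left_cancel h
  refine ⟨?_, part2, hinj, ?_⟩
  · intro y hyS hyw
    have hmem := haddC y hyS
    by_cases h0 : x + y = 0
    · exact hyeqx y h0
    · exfalso
      have hge := hmin _ hmem h0
      have hw := wt_add_eq x y
      rw [hx1, hyw] at hw
      have hk := hkle y
      omega
  · rw [← Set.ncard_image_of_injOn hinj]
    apply Set.ncard_le_ncard
    · rintro _ ⟨y, ⟨hyS, hyw⟩, rfl⟩
      exact ⟨(part2 y hyS hyw).1, (part2 y hyS hyw).2⟩
    · exact Set.toFinite _
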